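/- arXiv:1310.1821 — 3 statements merged into one kernel-verified Lean document; each statement's English description precedes it below -/
import Mathlib

section
/- For every real number μ, one has log((1 - i·μ)/(1 + i·μ)) = -2i·arctan(μ), where log is the principal branch of the complex logarithm. Consequently, for a real symmetric n×n matrix s with eigenvalues μ_1,...,μ_n, det Cay(s) = exp(-2i·∑_{j=1}^n arctan μ_j). -/
open Matrix Complex Polynomial

/-- The Cayley transform of a real symmetric matrix (viewed as a complex matrix). -/
noncomputable def Cay {n : ℕ} (s : Matrix (Fin n) (Fin n) ℝ) : Matrix (Fin n) (Fin n) ℂ :=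
  (1 - Complex.I • s.map Complex.ofReal) * (1 + Complex.I • s.map Complex.ofReal)⁻¹

/-!
With `θ = arctan μ` one has `sin θ = μ cos θ`, hence
`exp (-2iθ) = (cos θ - i sin θ) / (cos θ + i sin θ) = (1 - iμ) / (1 + iμ)`; since `|2θ| < π`
the principal logarithm inverts this exponential. For the determinant, `1 - t • M = t • (t⁻¹ - M)`
for `t ≠ 0`, so `det (1 - t • M) = t ^ n · charpoly M (t⁻¹) = ∏ (1 - t μⱼ)`; taking `t = ±i`
makes `det Cay s` a product of the scalar quotients, i.e. of `exp (-2i arctan μⱼ)`.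
-/

theorem Matrix.det_one_sub_smul_of_charpoly_eq_prod {K ι : Type*} [Field K] [Fintype ι]
    [DecidableEq ι] {M : Matrix ι ι K} {μ : ι → K} (hM : M.charpoly = ∏ j, (X - C (μ j)))
    (t : K) : (1 - t • M).det = ∏ j, (1 - t * μ j) := by
  rcases eq_or_ne t 0 with rfl | ht
  · simp
  have hscalar : 1 - t • M = t • (scalar ι t⁻¹ - M) := by
    rw [smul_sub, scalar_apply, ← smul_one_eq_diagonal, smul_smul, mul_inv_cancel₀ ht, one_smul]
  rw [hscalar, det_smul, ← eval_charpoly, hM, eval_prod, ← Finset.card_univ, ← Finset.prod_const,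
    ← Finset.prod_mul_distrib]
  refine Finset.prod_congr rfl fun j _ => ?_
  simp [mul_sub, ht]

theorem Complex.exp_neg_two_mul_I_mul_arctan (μ : ℝ) :
    exp (-2 * I * Real.arctan μ) = (1 - I * μ) / (1 + I * μ) := by
  set θ := Real.arctan μ
  have hcos : Real.cos θ ≠ 0 := (Real.cos_arctan_pos μ).ne'
  have hsin : (Real.sin θ : ℂ) = μ * Real.cos θ := by
    rw [← Real.tan_arctan μ, Real.tan_eq_sin_div_cos, ofReal_div,
      div_mul_cancel₀ _ (ofReal_ne_zero.2 hcos)]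
  have hden : 1 + I * μ ≠ 0 := by
    intro h
    simpa using congrArg re h
  have hexp : exp (-2 * I * θ) = exp (-θ * I) / exp (θ * I) := by
    rw [← exp_sub]
    ring_nf
  rw [hexp, div_eq_div_iff (exp_ne_zero _) hden, exp_mul_I, exp_mul_I, cos_neg, sin_neg,
    ← ofReal_cos, ← ofReal_sin]
  linear_combination (-2 * I) * hsin

theorem Complex.log_one_sub_I_mul_div_one_add_I_mul (μ : ℝ) :
    log ((1 - I * μ) / (1 + I * μ)) = -2 * I * Real.arctan μ := by
  rw [← exp_neg_two_mul_I_mul_arctan]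
  have hlt := Real.arctan_lt_pi_div_two μ
  have hgt := Real.neg_pi_div_two_lt_arctan μ
  apply log_exp <;> simp [-ofReal_arctan] <;> linarith

theorem det_Cay_eq_prod {n : ℕ} (s : Matrix (Fin n) (Fin n) ℝ) (μ : Fin n → ℝ)
    (hs : s.charpoly = ∏ j, (X - C (μ j))) :
    (Cay s).det = ∏ j, (1 - I * μ j) / (1 + I * μ j) := by
  have hsC : (s.map ofReal).charpoly = ∏ j, (X - C (μ j : ℂ)) :=
    (charpoly_map s ofRealHom).trans (by simp [hs, Polynomial.map_prod])
  have hplus : (1 : Matrix (Fin n) (Fin n) ℂ) + I • s.map ofReal = 1 - (-I) • s.map ofReal := by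
    rw [neg_smul, sub_neg_eq_add]
  rw [Cay, det_mul, det_nonsing_inv, Ring.inverse_eq_inv', hplus,
    det_one_sub_smul_of_charpoly_eq_prod hsC, det_one_sub_smul_of_charpoly_eq_prod hsC,
    ← div_eq_mul_inv, ← Finset.prod_div_distrib]
  simp only [neg_mul, sub_neg_eq_add]

theorem log_cayley_arctan {n : ℕ} :
    (∀ μ : ℝ, Complex.log ((1 - Complex.I * (μ : ℂ)) / (1 + Complex.I * (μ : ℂ)))
        = -2 * Complex.I * (Real.arctan μ : ℂ)) ∧
    (∀ (s : Matrix (Fin n) (Fin n) ℝ), sᵀ = s → ∀ μ : Fin n → ℝ,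
      s.charpoly = ∏ j, (X - C (μ j)) →
      (Cay s).det = Complex.exp (-2 * Complex.I * (∑ j, Real.arctan (μ j) : ℝ))) := by
  refine ⟨log_one_sub_I_mul_div_one_add_I_mul, fun s _ μ hs => ?_⟩
  rw [det_Cay_eq_prod s μ hs, ofReal_sum, Finset.mul_sum, exp_sum]
  simp only [exp_neg_two_mul_I_mul_arctan]
end

section
/- With C = ½(a - d - i(b+c)) and D = ½(a + d + i(b-c)) where a, b, c, d are real n×n matrices with b, c symmetric and a = -d^T, and with u a unitary symmetric matrix, the matrix ξ := D - ½(u·C̄ - C·u*) is anti-Hermitian, i.e. ξ* = -ξ (so ξ lies in the unitary Lie algebra u(n)). -/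
open Matrix

/-- Complexification of a real matrix. -/
def mc {n : ℕ} (a : Matrix (Fin n) (Fin n) ℝ) : Matrix (Fin n) (Fin n) ℂ :=
  a.map Complex.ofReal

/-- `C = ½(a - d - i(b+c))`. -/
noncomputable def Cmat {n : ℕ} (a b c d : Matrix (Fin n) (Fin n) ℝ) :
    Matrix (Fin n) (Fin n) ℂ :=
  (1 / 2 : ℂ) • (mc a - mc d - Complex.I • (mc b + mc c))

/-- `D = ½(a + d + i(b-c))`. -/
noncomputable def Dmat {n : ℕ} (a b c d : Matrix (Fin n) (Fin n) ℝ) :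
    Matrix (Fin n) (Fin n) ℂ :=
  (1 / 2 : ℂ) • (mc a + mc d + Complex.I • (mc b - mc c))

/-- Entrywise complex conjugation. -/
def mconj {n : ℕ} (M : Matrix (Fin n) (Fin n) ℂ) : Matrix (Fin n) (Fin n) ℂ :=
  M.map (starRingEnd ℂ)

lemma mc_transpose {n : ℕ} (a : Matrix (Fin n) (Fin n) ℝ) : (mc a)ᵀ = mc aᵀ := by
  ext i j; simp [mc]

lemma mc_conjTranspose {n : ℕ} (a : Matrix (Fin n) (Fin n) ℝ) : (mc a)ᴴ = mc aᵀ := by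
  ext i j; simp [mc, Matrix.conjTranspose_apply]

lemma mconj_conjTranspose {n : ℕ} (M : Matrix (Fin n) (Fin n) ℂ) : (mconj M)ᴴ = Mᵀ := by
  ext i j; simp [mconj, Matrix.conjTranspose_apply]

lemma mconj_transpose {n : ℕ} (M : Matrix (Fin n) (Fin n) ℂ) : (mconj M)ᵀ = Mᴴ := by
  ext i j; simp [mconj, Matrix.conjTranspose_apply]

lemma Cmat_transpose {n : ℕ}
    (a b c d : Matrix (Fin n) (Fin n) ℝ)
    (hb : bᵀ = b) (hc : cᵀ = c) (had : a = -dᵀ) :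
    (Cmat a b c d)ᵀ = Cmat a b c d := by
  have hb' : ∀ i j, b j i = b i j := fun i j => congrFun (congrFun hb i) j
  have hc' : ∀ i j, c j i = c i j := fun i j => congrFun (congrFun hc i) j
  subst had
  ext i j
  simp [Cmat, mc, Matrix.transpose_apply]
  rw [hb' i j, hc' i j]
  ring

lemma Cmat_conjTranspose {n : ℕ}
    (a b c d : Matrix (Fin n) (Fin n) ℝ)
    (hb : bᵀ = b) (hc : cᵀ = c) (had : a = -dᵀ) :
    (Cmat a b c d)ᴴ = mconj (Cmat a b c d) := by
  have : (Cmat a b c d)ᴴ = mconj ((Cmat a b c d)ᵀ) := by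
    ext i j; simp [mconj, Matrix.conjTranspose_apply]
  rw [this, Cmat_transpose a b c d hb hc had]

lemma Dmat_conjTranspose {n : ℕ}
    (a b c d : Matrix (Fin n) (Fin n) ℝ)
    (hb : bᵀ = b) (hc : cᵀ = c) (had : a = -dᵀ) :
    (Dmat a b c d)ᴴ = -(Dmat a b c d) := by
  have hb' : ∀ i j, b j i = b i j := fun i j => congrFun (congrFun hb i) j
  have hc' : ∀ i j, c j i = c i j := fun i j => congrFun (congrFun hc i) j
  subst had
  ext i j
  simp [Dmat, mc, Matrix.conjTranspose_apply, Complex.ext_iff]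
  rw [hb' i j, hc' i j]

theorem xi_anti_hermitian {n : ℕ}
    (a b c d : Matrix (Fin n) (Fin n) ℝ)
    (hb : bᵀ = b) (hc : cᵀ = c) (had : a = -dᵀ)
    (u : Matrix (Fin n) (Fin n) ℂ) (hu : uᴴ * u = 1) (husym : uᵀ = u) :
    (Dmat a b c d - (1 / 2 : ℂ) • (u * mconj (Cmat a b c d) - Cmat a b c d * uᴴ))ᴴ
      = -(Dmat a b c d - (1 / 2 : ℂ) • (u * mconj (Cmat a b c d) - Cmat a b c d * uᴴ)) := by
  set C := Cmat a b c d with hCdef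
  have hX : (u * mconj C - C * uᴴ)ᴴ = -(u * mconj C - C * uᴴ) := by
    rw [Matrix.conjTranspose_sub, Matrix.conjTranspose_mul, Matrix.conjTranspose_mul,
      Matrix.conjTranspose_conjTranspose, mconj_conjTranspose,
      Cmat_transpose a b c d hb hc had, Cmat_conjTranspose a b c d hb hc had, neg_sub]
  rw [Matrix.conjTranspose_sub, Matrix.conjTranspose_smul,
    Dmat_conjTranspose a b c d hb hc had, hX]
  simp [smul_neg]
  module
end

section
/- Under the hypotheses above (b, c symmetric, a = -d^T, u unitary symmetric), the Riccati vector field on unitary symmetric matrices can be written as a Lie algebra action: C + D·u - u·(D̄ + C̄·u) = ξ·u - u·ξ̄, where ξ := D - ½(u·C̄ - C·u*). -/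
open Matrix

lemma mconj_eq {n : ℕ} (M : Matrix (Fin n) (Fin n) ℂ) : mconj M = Mᴴᵀ := by
  ext i j; simp [mconj, conjTranspose, transpose]

lemma mconj_mul {n : ℕ} (M N : Matrix (Fin n) (Fin n) ℂ) :
    mconj (M * N) = mconj M * mconj N := by
  simp [mconj_eq, conjTranspose_mul, transpose_mul]

lemma mconj_sub {n : ℕ} (M N : Matrix (Fin n) (Fin n) ℂ) :
    mconj (M - N) = mconj M - mconj N := by
  simp [mconj_eq]

lemma mconj_smul {n : ℕ} (z : ℂ) (M : Matrix (Fin n) (Fin n) ℂ) :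
    mconj (z • M) = (starRingEnd ℂ z) • mconj M := by
  simp [mconj_eq]

lemma key {n : ℕ} (C D u : Matrix (Fin n) (Fin n) ℂ)
    (hu : uᴴ * u = 1) (husym : uᵀ = u) :
    C + D * u - u * (mconj D + mconj C * u)
      = (D - (1/2 : ℂ) • (u * mconj C - C * uᴴ)) * u
        - u * mconj (D - (1/2 : ℂ) • (u * mconj C - C * uᴴ)) := by
  have huu : u * uᴴ = 1 := mul_eq_one_comm.mp hu
  have hcu : mconj u = uᴴ := by
    ext i j
    have h := congrFun (congrFun husym j) i
    simp only [transpose_apply] at h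
    simp [mconj, conjTranspose, transpose, h]
  have hcuH : mconj uᴴ = u := by
    ext i j
    have h := congrFun (congrFun husym j) i
    simp only [transpose_apply] at h
    simp [mconj, conjTranspose, transpose, h]
  rw [mconj_sub, mconj_smul, mconj_sub, mconj_mul, mconj_mul, hcu, hcuH]
  have hcc : mconj (mconj C) = C := by
    ext i j; simp [mconj]
  have hhalf : (starRingEnd ℂ) (1/2 : ℂ) = (1/2 : ℂ) := by
    rw [map_div₀, RingHom.map_one, Complex.conj_ofNat]
  rw [hcc, hhalf]
  simp only [sub_mul, mul_sub, mul_add, add_mul, smul_mul_assoc, mul_smul_comm, smul_sub, mul_assoc, hu, huu, mul_one, one_mul]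
  rw [← mul_assoc u uᴴ C, huu, one_mul]
  module

theorem riccati_vector_field_as_lie_algebra_action {n : ℕ}
    (a b c d : Matrix (Fin n) (Fin n) ℝ)
    (hb : bᵀ = b) (hc : cᵀ = c) (had : a = -dᵀ)
    (u : Matrix (Fin n) (Fin n) ℂ) (hu : uᴴ * u = 1) (husym : uᵀ = u) :
    Cmat a b c d + Dmat a b c d * u - u * (mconj (Dmat a b c d) + mconj (Cmat a b c d) * u)
      = (Dmat a b c d - (1 / 2 : ℂ) • (u * mconj (Cmat a b c d) - Cmat a b c d * uᴴ)) * u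
        - u * mconj (Dmat a b c d - (1 / 2 : ℂ) • (u * mconj (Cmat a b c d) - Cmat a b c d * uᴴ)) :=
  key (Cmat a b c d) (Dmat a b c d) u hu husym
end
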